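/- arXiv:2009.09499 — 2 statements merged into one kernel-verified Lean document; each statement's English description precedes it below -/
import Mathlib

section
/- If a, b ∈ ℂ satisfy |a|² + |b|² = 1, ab ≠ 0, and |a|² ≠ |b|², then there do not exist positive semidefinite 2×2 matrices G_{UU}, G_{UD}, G_{DU}, G_{DD} such that G_{UU} + G_{UD} = |↑⟩⟨↑|, G_{DU} + G_{DD} = |↓⟩⟨↓|, G_{UU} + G_{DU} = E²_U, and G_{UD} + G_{DD} = E²_D. -/
open Matrix
open scoped ComplexOrder

def e (k : Fin 2) : Fin 2 → ℂ := fun i => if i = k then 1 else 0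

def phi1 (a b : ℂ) : Fin 2 → ℂ := ![a, b]

def phi2 (a b : ℂ) : Fin 2 → ℂ := ![star b, -star a]

/-- E²_U = |a|²|φ₁⟩⟨φ₁| + |b|²|φ₂⟩⟨φ₂|. -/
noncomputable def E2U (a b : ℂ) : Matrix (Fin 2) (Fin 2) ℂ :=
  ((‖a‖ ^ 2 : ℝ) : ℂ) • vecMulVec (phi1 a b) (star (phi1 a b)) +
  ((‖b‖ ^ 2 : ℝ) : ℂ) • vecMulVec (phi2 a b) (star (phi2 a b))

/-- E²_D = |b|²|φ₁⟩⟨φ₁| + |a|²|φ₂⟩⟨φ₂|. -/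
noncomputable def E2D (a b : ℂ) : Matrix (Fin 2) (Fin 2) ℂ :=
  ((‖b‖ ^ 2 : ℝ) : ℂ) • vecMulVec (phi1 a b) (star (phi1 a b)) +
  ((‖a‖ ^ 2 : ℝ) : ℂ) • vecMulVec (phi2 a b) (star (phi2 a b))

/-!
The joint observable would split `|↑⟩⟨↑| = G_UU + G_UD` into positive parts, so the `↓↓` entry
of `G_UU` vanishes, and positivity then kills its off-diagonal entries; likewise for `G_DU` and
the `↑↑` entry. Hence `E²_U = G_UU + G_DU` would be diagonal, whereas its `↑↓` entry is
`a b̄ (|a|² - |b|²) ≠ 0`.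
-/

namespace Matrix.PosSemidef

variable {n 𝕜 : Type*} [RCLike 𝕜] {A B : Matrix n n 𝕜}

theorem apply_eq_zero_of_diag_eq_zero [Fintype n] [DecidableEq n] (hA : A.PosSemidef) {i : n}
    (hi : A i i = 0) (j : n) : A j i = 0 := by
  have hquad : star (Pi.single i 1) ⬝ᵥ A *ᵥ Pi.single i (1 : 𝕜) = 0 := by
    rw [mulVec_single_one, ← Pi.single_star, star_one, single_one_dotProduct]
    exact hi
  simpa [mulVec_single_one] using congrFun ((hA.dotProduct_mulVec_zero_iff _).1 hquad) j

theorem apply_eq_zero_of_diag_eq_zero' [Fintype n] [DecidableEq n] (hA : A.PosSemidef) {i : n}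
    (hi : A i i = 0) (j : n) : A i j = 0 := by
  rw [← hA.isHermitian.apply i j, apply_eq_zero_of_diag_eq_zero hA hi, star_zero]

theorem diag_eq_zero_of_add (hA : A.PosSemidef) (hB : B.PosSemidef) {i : n}
    (hi : (A + B) i i = 0) : A i i = 0 :=
  ((add_eq_zero_iff_of_nonneg hA.diag_nonneg hB.diag_nonneg).1 hi).1

end Matrix.PosSemidef

theorem E2U_apply_zero_one (a b : ℂ) :
    E2U a b 0 1 = a * star b * ((‖a‖ ^ 2 - ‖b‖ ^ 2 : ℝ) : ℂ) := by
  simp only [E2U, Matrix.add_apply, Matrix.smul_apply, vecMulVec_apply, phi1, phi2]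
  simp
  ring

theorem E2U_apply_zero_one_ne_zero {a b : ℂ} (hab0 : a * b ≠ 0) (hne : ‖a‖ ^ 2 ≠ ‖b‖ ^ 2) :
    E2U a b 0 1 ≠ 0 := by
  obtain ⟨ha, hb⟩ := mul_ne_zero_iff.1 hab0
  rw [E2U_apply_zero_one]
  exact mul_ne_zero (mul_ne_zero ha (star_ne_zero.2 hb))
    (Complex.ofReal_ne_zero.2 (sub_ne_zero.2 hne))

theorem no_joint_povm_general (a b : ℂ)
    (hab0 : a * b ≠ 0)
    (hne : ‖a‖ ^ 2 ≠ ‖b‖ ^ 2) :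
    ¬ ∃ (GUU GUD GDU GDD : Matrix (Fin 2) (Fin 2) ℂ),
        GUU.PosSemidef ∧ GUD.PosSemidef ∧ GDU.PosSemidef ∧ GDD.PosSemidef ∧
        GUU + GUD = vecMulVec (e 0) (star (e 0)) ∧
        GDU + GDD = vecMulVec (e 1) (star (e 1)) ∧
        GUU + GDU = E2U a b ∧
        GUD + GDD = E2D a b := by
  rintro ⟨GUU, GUD, GDU, GDD, hUU, hUD, hDU, hDD, hUp, hDown, hEU, -⟩
  have hUU11 : GUU 1 1 = 0 :=
    hUU.diag_eq_zero_of_add hUD (by rw [hUp]; simp [vecMulVec_apply, e])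
  have hDU00 : GDU 0 0 = 0 :=
    hDU.diag_eq_zero_of_add hDD (by rw [hDown]; simp [vecMulVec_apply, e])
  apply E2U_apply_zero_one_ne_zero hab0 hne
  rw [← hEU, Matrix.add_apply, hUU.apply_eq_zero_of_diag_eq_zero hUU11,
    hDU.apply_eq_zero_of_diag_eq_zero' hDU00, add_zero]

/-- No-go: the sharp POVM {|↑⟩⟨↑|, |↓⟩⟨↓|} and the POVM {E²_U, E²_D} admit no joint POVM
when ab ≠ 0 and |a|² ≠ |b|². -/
theorem no_joint_povm (a b : ℂ)
    (hab : ‖a‖ ^ 2 + ‖b‖ ^ 2 = 1)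
    (hab0 : a * b ≠ 0)
    (hne : ‖a‖ ^ 2 ≠ ‖b‖ ^ 2) :
    ¬ ∃ (GUU GUD GDU GDD : Matrix (Fin 2) (Fin 2) ℂ),
        GUU.PosSemidef ∧ GUD.PosSemidef ∧ GDU.PosSemidef ∧ GDD.PosSemidef ∧
        GUU + GUD = vecMulVec (e 0) (star (e 0)) ∧
        GDU + GDD = vecMulVec (e 1) (star (e 1)) ∧
        GUU + GDU = E2U a b ∧
        GUD + GDD = E2D a b :=
  no_joint_povm_general a b hab0 hne
end

section
/- Let P be an orthogonal projection and E a positive semidefinite operator on a finite-dimensional Hilbert space with E ≤ I. If there exists a positive semidefinite operator G such that P − G ≥ 0 and E − G ≥ 0 and (I − P) − (E − G) ≥ 0, then PE = EP. -/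
open Matrix
open scoped ComplexOrder

/-- A PSD matrix with vanishing quadratic form is zero. -/
lemma psd_eq_zero_of_quadform {n : ℕ} {A : Matrix (Fin n) (Fin n) ℂ}
    (hA : A.PosSemidef) (h : ∀ x : Fin n → ℂ, star x ⬝ᵥ A *ᵥ x = 0) : A = 0 := by
  have hz : ∀ x : Fin n → ℂ, A *ᵥ x = 0 := fun x => (hA.dotProduct_mulVec_zero_iff x).mp (h x)
  ext i j
  have := congrFun (hz (Pi.single j 1)) i
  simpa [mulVec_single] using this

/-- If A, B are PSD and A + B = 0 then A = 0. -/
lemma psd_add_eq_zero {n : ℕ} {A B : Matrix (Fin n) (Fin n) ℂ}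
    (hA : A.PosSemidef) (hB : B.PosSemidef) (h : A + B = 0) : A = 0 := by
  apply psd_eq_zero_of_quadform hA
  intro x
  have hAx := hA.dotProduct_mulVec_nonneg x
  have hBx := hB.dotProduct_mulVec_nonneg x
  have hsum : star x ⬝ᵥ A *ᵥ x + star x ⬝ᵥ B *ᵥ x = 0 := by
    rw [← dotProduct_add, ← add_mulVec, h, zero_mulVec, dotProduct_zero]
  have : star x ⬝ᵥ A *ᵥ x ≤ 0 := by
    rw [add_eq_zero_iff_eq_neg] at hsum
    rw [hsum]
    exact neg_nonpos.mpr hBx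
  exact le_antisymm this hAx

/-- If A is PSD, Q Hermitian and Q * A * Q = 0, then A * Q = 0. -/
lemma psd_sandwich_zero {n : ℕ} {A Q : Matrix (Fin n) (Fin n) ℂ}
    (hA : A.PosSemidef) (hQ : Qᴴ = Q) (h : Q * A * Q = 0) : A * Q = 0 := by
  obtain ⟨S, hs, hsh⟩ : ∃ S : Matrix (Fin n) (Fin n) ℂ, S * S = A ∧ Sᴴ = S := by
    open scoped MatrixOrder in
    exact ⟨CFC.sqrt A, CFC.sqrt_mul_sqrt_self A hA.nonneg, (CFC.sqrt_nonneg A).isSelfAdjoint⟩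
  have h0 : (S * Q)ᴴ * (S * Q) = 0 := by
    rw [conjTranspose_mul, hsh, hQ]
    calc Q * S * (S * Q) = Q * (S * S) * Q := by noncomm_ring
    _ = 0 := by rw [hs, h]
  have : S * Q = 0 := conjTranspose_mul_self_eq_zero.mp h0
  calc A * Q = S * (S * Q) := by rw [← mul_assoc, hs]
  _ = 0 := by rw [this, mul_zero]

/-- Joint measurability of two binary POVMs {P, I−P}, {E, I−E}, with P sharp
(an orthogonal projection), implies commutativity [P, E] = 0. -/
theorem joint_measurable_sharp_implies_commute {n : ℕ}
    (P E : Matrix (Fin n) (Fin n) ℂ)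
    (hPproj : P.IsHermitian ∧ P * P = P)
    (hE : E.PosSemidef) (hE1 : (1 - E).PosSemidef)
    (hjoint : ∃ G : Matrix (Fin n) (Fin n) ℂ,
        G.PosSemidef ∧ (P - G).PosSemidef ∧ (E - G).PosSemidef ∧
        ((1 - P) - (E - G)).PosSemidef) :
    P * E = E * P := by
  obtain ⟨G, hG, hPG, hEG, hQEG⟩ := hjoint
  obtain ⟨hPh, hP2⟩ := hPproj
  set Q : Matrix (Fin n) (Fin n) ℂ := 1 - P with hQdef
  have hQh : Qᴴ = Q := by
    simp [hQdef, conjTranspose_sub, hPh.eq]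
  -- Q * G * Q = 0
  have h1 : Q * G * Q + Q * (P - G) * Q = 0 := by
    have : Q * P * Q = 0 := by
      simp only [hQdef, sub_mul, mul_sub, one_mul, mul_one, hP2]
      noncomm_ring
    calc Q * G * Q + Q * (P - G) * Q = Q * P * Q := by noncomm_ring
    _ = 0 := this
  have hQGQ : Q * G * Q = 0 := by
    have a1 := hG.mul_mul_conjTranspose_same Q
    have a2 := hPG.mul_mul_conjTranspose_same Q
    rw [hQh] at a1 a2
    exact psd_add_eq_zero a1 a2 h1
  have hGQ : G * Q = 0 := psd_sandwich_zero hG hQh hQGQ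
  -- P * (E - G) * P = 0
  have h2 : P * (E - G) * P + P * ((1 - P) - (E - G)) * P = 0 := by
    have : P * (1 - P) * P = 0 := by
      simp only [mul_sub, sub_mul, one_mul, mul_one, hP2]
      noncomm_ring
    calc P * (E - G) * P + P * ((1 - P) - (E - G)) * P = P * (1 - P) * P := by noncomm_ring
    _ = 0 := this
  have hPEGP : P * (E - G) * P = 0 := by
    have a1 := hEG.mul_mul_conjTranspose_same P
    have a2 := hQEG.mul_mul_conjTranspose_same P
    rw [hPh.eq] at a1 a2
    exact psd_add_eq_zero a1 a2 h2
  have hEGP : (E - G) * P = 0 := psd_sandwich_zero hEG hPh.eq hPEGP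
  -- Transposes: Q * G = 0 and P * (E - G) = 0
  have hQG : Q * G = 0 := by
    have := congrArg conjTranspose hGQ
    simpa [conjTranspose_mul, hQh, hG.isHermitian.eq] using this
  have hPEG : P * (E - G) = 0 := by
    have := congrArg conjTranspose hEGP
    simpa [conjTranspose_mul, hPh.eq, hEG.isHermitian.eq] using this
  -- conclude
  have hGP : G * P = G := by
    have : G * (1 - P) = 0 := hGQ
    rw [mul_sub, mul_one, sub_eq_zero] at this
    exact this.symm
  have hPGeq : P * G = G := by
    have : (1 - P) * G = 0 := hQG
    rw [sub_mul, one_mul, sub_eq_zero] at this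
    exact this.symm
  have hEP : E * P = G := by
    have : (E - G) * P = 0 := hEGP
    rw [sub_mul, sub_eq_zero] at this
    rw [this, hGP]
  have hPE : P * E = G := by
    have : P * (E - G) = 0 := hPEG
    rw [mul_sub, sub_eq_zero] at this
    rw [this, hPGeq]
  rw [hPE, hEP]
end
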